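/- For every feasible point x ∈ X of problem (P1), there exists a feasible point x′ ∈ X at which both power-balance constraints and both bandwidth constraints hold with equality — i.e., Σ_{k∈K_i} p_k′ + P_{c,i} = E_i′ + G_i′ + β_E·e_ī′ − e_i′ and Σ_{k∈K_i} b_k′ = W_i + β_B·w_ī′ − w_i′ for i = 1, 2 — and whose costs satisfy C_i(x′) ≤ C_i(x) for i = 1, 2 (hence any weighted sum cost is no larger). In particular, the optimum of (P1) is attained at a point where these inequality constraints are tight. -/
import Mathlib


/-- Decision vector of problem (P1). -/
abbrev P1Vec (ι : Type*) :=
  (Fin 2 → ℝ) × (Fin 2 → ℝ) × (Fin 2 → ℝ) × (Fin 2 → ℝ) × (ι → ℝ) × (ι → ℝ)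

/-- Feasibility (membership in the region `X`) for problem (P1). -/
def P1Feasible {ι : Type*} [DecidableEq ι] (K : Fin 2 → Finset ι) (g r : ι → ℝ)
    (W Pc Ebar : Fin 2 → ℝ) (N₀ βE βB : ℝ) (x : P1Vec ι) : Prop :=
  match x with
  | (E, G, e, w, p, b) =>
    (∀ i, 0 ≤ E i) ∧ (∀ i, 0 ≤ G i) ∧ (∀ i, 0 ≤ e i) ∧ (∀ i, 0 ≤ w i) ∧
    (∀ k ∈ K 0 ∪ K 1, 0 ≤ p k) ∧ (∀ k ∈ K 0 ∪ K 1, 0 < b k) ∧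
    (∀ i, (∑ k ∈ K i, p k) + Pc i ≤ E i + G i + βE * e (1 - i) - e i) ∧
    (∀ i, (∑ k ∈ K i, b k) ≤ W i + βB * w (1 - i) - w i) ∧
    (∀ i, E i ≤ Ebar i) ∧
    (∀ i, ∀ k ∈ K i, r k ≤ b k * Real.logb 2 (1 + g k * p k / (b k * N₀)))

/-- The energy cost of system `i`: `C_i(x) = αE_i·E_i + αG_i·G_i`. -/
def P1Cost {ι : Type*} [DecidableEq ι] (αE αG : Fin 2 → ℝ) (i : Fin 2) (x : P1Vec ι) : ℝ :=
  αE i * x.1 i + αG i * x.2.1 i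

/-- Auxiliary: `b ↦ b·log₂(1 + c/b)` is monotone on `(0,∞)` for `c ≥ 0`. -/
lemma key_b_mono {b b' c : ℝ} (hb : 0 < b) (hbb : b ≤ b') (hc : 0 ≤ c) :
    b * Real.logb 2 (1 + c / b) ≤ b' * Real.logb 2 (1 + c / b') := by
  have hb' : 0 < b' := hb.trans_le hbb
  have h1 : (0:ℝ) < 1 + c / b' := by positivity
  have h0 : (0:ℝ) < 1 + c / b := by positivity
  have hp : (1:ℝ) ≤ b' / b := (one_le_div hb).mpr hbb
  have hbern : 1 + c / b ≤ (1 + c / b') ^ (b' / b : ℝ) := by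
    have h := one_add_mul_self_le_rpow_one_add (s := c / b')
      (le_trans (by norm_num) (by positivity : (0:ℝ) ≤ c / b')) hp
    have heq : 1 + c / b = 1 + b' / b * (c / b') := by
      field_simp
    rw [heq]; exact h
  have hlog : Real.log (1 + c / b) ≤ (b' / b) * Real.log (1 + c / b') := by
    have := Real.log_le_log h0 hbern
    rwa [Real.log_rpow h1] at this
  have hL' : 0 ≤ Real.log (1 + c / b') := Real.log_nonneg (by linarith [div_nonneg hc hb'.le])
  have h2 : (0:ℝ) < Real.log 2 := Real.log_pos one_lt_two
  rw [Real.logb, Real.logb]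
  have key : b * Real.log (1 + c / b) ≤ b' * Real.log (1 + c / b') := by
    calc b * Real.log (1 + c / b) ≤ b * ((b' / b) * Real.log (1 + c / b')) :=
          mul_le_mul_of_nonneg_left hlog hb.le
      _ = b' * Real.log (1 + c / b') := by field_simp
  calc b * (Real.log (1 + c / b) / Real.log 2)
      = b * Real.log (1 + c / b) / Real.log 2 := by ring
    _ ≤ b' * Real.log (1 + c / b') / Real.log 2 := by gcongr
    _ = b' * (Real.log (1 + c / b') / Real.log 2) := by ring

/-- For every feasible point of (P1) there is a feasible point with both
power-balance and both bandwidth constraints tight whose costs are no larger; hence the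
optimum of (P1) is attained where these constraints hold with equality. -/
theorem P1_tight_point_exists {ι : Type*} [DecidableEq ι] (K : Fin 2 → Finset ι)
    (hK : ∀ i, (K i).Nonempty) (hdisj : Disjoint (K 0) (K 1))
    (g r : ι → ℝ) (hg : ∀ k ∈ K 0 ∪ K 1, 0 < g k) (hr : ∀ k ∈ K 0 ∪ K 1, 0 < r k)
    (W Pc Ebar αE αG : Fin 2 → ℝ)
    (hW : ∀ i, 0 < W i) (hPc : ∀ i, 0 ≤ Pc i) (hEbar : ∀ i, 0 ≤ Ebar i)
    (hαE : ∀ i, 0 < αE i) (hα : ∀ i, αE i < αG i)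
    (N₀ βE βB : ℝ) (hN₀ : 0 < N₀) (hβE : βE ∈ Set.Icc (0 : ℝ) 1)
    (hβB : βB = 0 ∨ βB = 1)
    (x : P1Vec ι) (hx : P1Feasible K g r W Pc Ebar N₀ βE βB x) :
    ∃ x' : P1Vec ι, P1Feasible K g r W Pc Ebar N₀ βE βB x' ∧
      (∀ i, (∑ k ∈ K i, x'.2.2.2.2.1 k) + Pc i =
        x'.1 i + x'.2.1 i + βE * x'.2.2.1 (1 - i) - x'.2.2.1 i) ∧
      (∀ i, (∑ k ∈ K i, x'.2.2.2.2.2 k) =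
        W i + βB * x'.2.2.2.1 (1 - i) - x'.2.2.2.1 i) ∧
      (∀ i, P1Cost αE αG i x' ≤ P1Cost αE αG i x) := by
  obtain ⟨E, G, e, w, p, b⟩ := x
  obtain ⟨hE, hG, he, hw, hp, hb, hpow, hband, hEb, hqos⟩ := hx
  -- chosen terminal in each system
  have hk0 : ∀ i, (hK i).choose ∈ K i := fun i => (hK i).choose_spec
  set k0 : Fin 2 → ι := fun i => (hK i).choose with hk0def
  have hk0mem : ∀ i, k0 i ∈ K i := hk0
  have hk01 : k0 0 ∉ K 1 := Finset.disjoint_left.mp hdisj (hk0mem 0)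
  have hk10 : k0 1 ∉ K 0 := Finset.disjoint_right.mp hdisj (hk0mem 1)
  -- slacks
  set sP : Fin 2 → ℝ :=
    fun i => E i + G i + βE * e (1 - i) - e i - ((∑ k ∈ K i, p k) + Pc i) with hsPdef
  set sB : Fin 2 → ℝ :=
    fun i => W i + βB * w (1 - i) - w i - (∑ k ∈ K i, b k) with hsBdef
  have hsP : ∀ i, 0 ≤ sP i := fun i => by
    have := hpow i; simp only [hsPdef]; linarith
  have hsB : ∀ i, 0 ≤ sB i := fun i => by
    have := hband i; simp only [hsBdef]; linarith
  -- modified powers and bandwidths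
  set p' : ι → ℝ :=
    fun k => p k + (if k = k0 0 then sP 0 else 0) + (if k = k0 1 then sP 1 else 0) with hp'def
  set b' : ι → ℝ :=
    fun k => b k + (if k = k0 0 then sB 0 else 0) + (if k = k0 1 then sB 1 else 0) with hb'def
  have hple : ∀ k, p k ≤ p' k := by
    intro k
    have h0 := hsP 0; have h1 := hsP 1
    simp only [hp'def]
    split_ifs <;> linarith
  have hble : ∀ k, b k ≤ b' k := by
    intro k
    have h0 := hsB 0; have h1 := hsB 1
    simp only [hb'def]
    split_ifs <;> linarith
  -- sums
  have hsump : ∀ i : Fin 2, (∑ k ∈ K i, p' k) = (∑ k ∈ K i, p k) + sP i := by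
    intro i
    have expand : ∀ s : Finset ι, (∑ k ∈ s, p' k) =
        (∑ k ∈ s, p k) + (if k0 0 ∈ s then sP 0 else 0) + (if k0 1 ∈ s then sP 1 else 0) := by
      intro s
      simp only [hp'def]
      rw [Finset.sum_add_distrib, Finset.sum_add_distrib, Finset.sum_ite_eq' s (k0 0),
        Finset.sum_ite_eq' s (k0 1)]
    fin_cases i
    · show (∑ k ∈ K 0, p' k) = (∑ k ∈ K 0, p k) + sP 0
      rw [expand (K 0)]; rw [if_pos (hk0mem 0), if_neg hk10]; ring
    · show (∑ k ∈ K 1, p' k) = (∑ k ∈ K 1, p k) + sP 1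
      rw [expand (K 1)]; rw [if_neg hk01, if_pos (hk0mem 1)]; ring
  have hsumb : ∀ i : Fin 2, (∑ k ∈ K i, b' k) = (∑ k ∈ K i, b k) + sB i := by
    intro i
    have expand : ∀ s : Finset ι, (∑ k ∈ s, b' k) =
        (∑ k ∈ s, b k) + (if k0 0 ∈ s then sB 0 else 0) + (if k0 1 ∈ s then sB 1 else 0) := by
      intro s
      simp only [hb'def]
      rw [Finset.sum_add_distrib, Finset.sum_add_distrib, Finset.sum_ite_eq' s (k0 0),
        Finset.sum_ite_eq' s (k0 1)]
    fin_cases i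
    · show (∑ k ∈ K 0, b' k) = (∑ k ∈ K 0, b k) + sB 0
      rw [expand (K 0)]; rw [if_pos (hk0mem 0), if_neg hk10]; ring
    · show (∑ k ∈ K 1, b' k) = (∑ k ∈ K 1, b k) + sB 1
      rw [expand (K 1)]; rw [if_neg hk01, if_pos (hk0mem 1)]; ring
  refine ⟨(E, G, e, w, p', b'), ?_, ?_, ?_, ?_⟩
  · -- feasibility
    refine ⟨hE, hG, he, hw, ?_, ?_, ?_, ?_, hEb, ?_⟩
    · intro k hk; exact le_trans (hp k hk) (hple k)
    · intro k hk; exact lt_of_lt_of_le (hb k hk) (hble k)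
    · intro i
      rw [hsump i]
      simp only [hsPdef]
      linarith
    · intro i
      rw [hsumb i]
      simp only [hsBdef]
      linarith
    · -- QoS
      intro i k hk
      have hku : k ∈ K 0 ∪ K 1 := by
        fin_cases i
        · exact Finset.mem_union_left _ hk
        · exact Finset.mem_union_right _ hk
      have hbk : 0 < b k := hb k hku
      have hb'k : 0 < b' k := lt_of_lt_of_le hbk (hble k)
      have hpk : 0 ≤ p k := hp k hku
      have hp'k : 0 ≤ p' k := le_trans hpk (hple k)
      have hgk : 0 < g k := hg k hku
      have step1 : b k * Real.logb 2 (1 + g k * p k / (b k * N₀)) ≤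
          b k * Real.logb 2 (1 + g k * p' k / (b k * N₀)) := by
        apply mul_le_mul_of_nonneg_left _ hbk.le
        apply Real.logb_le_logb_of_le one_lt_two (by positivity)
        gcongr
        exact hple k
      have hrw : ∀ t : ℝ, g k * p' k / (t * N₀) = (g k * p' k / N₀) / t := by
        intro t
        rw [mul_comm t N₀, ← div_div]
      have step2 : b k * Real.logb 2 (1 + g k * p' k / (b k * N₀)) ≤
          b' k * Real.logb 2 (1 + g k * p' k / (b' k * N₀)) := by
        rw [hrw (b k), hrw (b' k)]
        exact key_b_mono hbk (hble k) (by positivity)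
      exact le_trans (hqos i k hk) (le_trans step1 step2)
  · -- power tight
    intro i
    simp only
    rw [hsump i]
    simp only [hsPdef]
    ring
  · -- bandwidth tight
    intro i
    simp only
    rw [hsumb i]
    simp only [hsBdef]
    ring
  · intro i
    simp [P1Cost]
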